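/- Let D be a biplane with parameters (121,16,2) and x an automorphism of odd prime order p ∈ {5,7,13}, fixing a block B. Then (p, s, f) ∈ {(5,1,1), (7,2,2), (13,3,4)}, where s is the number of fixed points of x in B and f the total number of fixed points of x. -/

import Mathlib

/-!
An automorphism of prime order `p` that leaves a set of fewer than `p` objects invariant fixes
each of them, since its orbits have size `1` or `p`. As any two points of a biplane lie on two
blocks and any two blocks meet in two points, a block through two fixed points is fixed and two
fixed blocks meet in fixed points. Double counting then shows that every fixed point lies on `s`
fixed blocks, each carrying `s` fixed points, and counting the pairs (fixed point, fixed block)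
through one fixed point gives `2 (f - 1) = s (s - 1)`. Counting the fixed points on the `16` blocks
through a non-fixed point `y`, of which at most two are fixed (they also contain `σ y`), gives
`2 f ≤ 2 s + 16`. With `s ≡ 16 [MOD p]` only the three listed triples survive.
-/

open Finset Equiv

namespace Equiv.Perm
open scoped Pointwise
variable {α : Type*} [DecidableEq α] {p : ℕ} [Fact p.Prime]

theorem card_modEq_card_filter_apply_eq_self {τ : Perm α} (hτ : τ ^ p = 1) {T : Finset α}
    (hT : ∀ a ∈ T, τ a ∈ T) : #T ≡ #(T.filter fun a => τ a = a) [MOD p] := by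
  set ρ : Perm T := τ.subtypePermOfFintype hT
  have hρ : ρ ^ p ^ 1 = 1 := by
    ext x
    simp [ρ, subtypePermOfFintype, subtypePerm_pow, hτ]
  have hfix : ρ.supportᶜ.map (Function.Embedding.subtype _) = T.filter fun a => τ a = a := by
    ext a
    simp [ρ, and_comm]
  have h := card_compl_support_modEq hρ
  rw [Fintype.card_coe, ← card_map (Function.Embedding.subtype _), hfix] at h
  exact h.symm

theorem apply_eq_self_of_card_lt {τ : Perm α} (hτ : τ ^ p = 1) {T : Finset α}
    (hT : ∀ a ∈ T, τ a ∈ T) (hTp : #T < p) : ∀ a ∈ T, τ a = a := by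
  refine filter_card_eq ?_
  have hle : #(T.filter fun a => τ a = a) < p := (card_filter_le _ _).trans_lt hTp
  have h := card_modEq_card_filter_apply_eq_self hτ hT
  rwa [Nat.ModEq, Nat.mod_eq_of_lt hTp, Nat.mod_eq_of_lt hle, eq_comm] at h

theorem toPermHom_finset_apply (σ : Perm α) (s : Finset α) :
    MulAction.toPermHom (Perm α) (Finset α) σ s = s.image σ := by
  simp [smul_finset_def]

theorem image_eq_self_of_card_lt {σ : Perm α} (hσ : σ ^ p = 1) {𝓣 : Finset (Finset α)}
    (h𝓣 : ∀ t ∈ 𝓣, t.image σ ∈ 𝓣) (h𝓣p : #𝓣 < p) : ∀ t ∈ 𝓣, t.image σ = t := by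
  have hτ : MulAction.toPermHom (Perm α) (Finset α) σ ^ p = 1 := by rw [← map_pow, hσ, map_one]
  simpa only [toPermHom_finset_apply] using
    apply_eq_self_of_card_lt hτ (by simpa only [toPermHom_finset_apply] using h𝓣) h𝓣p

end Equiv.Perm

section Designs
variable {P : Type*} [DecidableEq P]

structure IsDesign (𝓑 : Finset (Finset P)) (k l : ℕ) : Prop where
  card_eq : ∀ b ∈ 𝓑, #b = k
  card_filter_mem_mem : ∀ x y : P, x ≠ y → #(𝓑.filter fun b => x ∈ b ∧ y ∈ b) = l

-- Symmetry (as many blocks as points) enters only through its consequence that any two blocks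
-- meet in `l` points, which is taken as the definition.
structure IsSymmetricDesign (𝓑 : Finset (Finset P)) (k l : ℕ) : Prop
    extends IsDesign 𝓑 k l where
  card_inter : ∀ b ∈ 𝓑, ∀ c ∈ 𝓑, b ≠ c → #(b ∩ c) = l

def fixedPts (σ : Perm P) (b : Finset P) : Finset P := b.filter fun x => σ x = x

def fixedBlocks (σ : Perm P) (𝓑 : Finset (Finset P)) : Finset (Finset P) :=
  𝓑.filter fun c => c.image σ = c

@[simp] theorem mem_fixedPts {σ : Perm P} {b : Finset P} {x : P} :
    x ∈ fixedPts σ b ↔ x ∈ b ∧ σ x = x := mem_filter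

@[simp] theorem mem_fixedBlocks {σ : Perm P} {𝓑 : Finset (Finset P)} {c : Finset P} :
    c ∈ fixedBlocks σ 𝓑 ↔ c ∈ 𝓑 ∧ c.image σ = c := mem_filter

theorem apply_mem_of_image_eq {σ : Perm P} {b : Finset P} (hb : b.image σ = b) {x : P}
    (hx : x ∈ b) : σ x ∈ b :=
  hb ▸ mem_image_of_mem σ hx

namespace IsDesign
variable {𝓑 : Finset (Finset P)} {k l : ℕ}

theorem card_filter_mem_mul [Fintype P] (hD : IsDesign 𝓑 k l) (q : P) :
    #(𝓑.filter (q ∈ ·)) * (k - 1) = l * (Fintype.card P - 1) := by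
  have h := sum_card_bipartiteAbove_eq_sum_card_bipartiteBelow (s := univ.erase q)
    (t := 𝓑.filter (q ∈ ·)) (r := fun x b => x ∈ b)
  have hpoint : ∀ x ∈ univ.erase q, #((𝓑.filter (q ∈ ·)).bipartiteAbove (· ∈ ·) x) = l := by
    intro x hx
    rw [bipartiteAbove, filter_filter]
    exact hD.card_filter_mem_mem q x (ne_of_mem_erase hx).symm
  have hblock : ∀ b ∈ 𝓑.filter (q ∈ ·), #((univ.erase q).bipartiteBelow (· ∈ ·) b) = k - 1 := by
    intro b hb
    rw [mem_filter] at hb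
    have : (univ.erase q).bipartiteBelow (· ∈ ·) b = b.erase q := by
      ext x
      simp [bipartiteBelow, and_comm]
    rw [this, card_erase_of_mem hb.2, hD.card_eq b hb.1]
  rw [sum_congr rfl hpoint, sum_congr rfl hblock, sum_const, sum_const, smul_eq_mul, smul_eq_mul,
    card_erase_of_mem (mem_univ q), card_univ] at h
  rw [← h, mul_comm]

theorem sum_card_inter_mul_self (hD : IsDesign 𝓑 k l) (hrep : ∀ q, #(𝓑.filter (q ∈ ·)) = k)
    {b : Finset P} (hb : b ∈ 𝓑) :
    ∑ c ∈ 𝓑, #(b ∩ c) * #(b ∩ c) = k * k + l * (k * k - k) := by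
  have hpairs : ∀ c, #(b ∩ c) * #(b ∩ c) = #((b ×ˢ b).filter fun z => z.1 ∈ c ∧ z.2 ∈ c) := by
    intro c
    rw [← card_product]
    congr 1
    ext z
    simp only [mem_product, mem_inter, mem_filter]
    tauto
  have h := sum_card_bipartiteAbove_eq_sum_card_bipartiteBelow (s := b ×ˢ b) (t := 𝓑)
    (r := fun z c => z.1 ∈ c ∧ z.2 ∈ c)
  simp only [bipartiteAbove, bipartiteBelow] at h
  have hdiag : ∀ z ∈ b.diag, #(𝓑.filter fun c => z.1 ∈ c ∧ z.2 ∈ c) = k := by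
    rintro ⟨x, y⟩ hz
    obtain ⟨-, rfl⟩ : x ∈ b ∧ x = y := mem_diag.mp hz
    simpa using hrep x
  have hoff : ∀ z ∈ b.offDiag, #(𝓑.filter fun c => z.1 ∈ c ∧ z.2 ∈ c) = l :=
    fun z hz => hD.card_filter_mem_mem z.1 z.2 (mem_offDiag.mp hz).2.2
  simp_rw [hpairs]
  rw [← h, ← diag_union_offDiag, sum_union (disjoint_diag_offDiag b), sum_congr rfl hdiag,
    sum_congr rfl hoff, sum_const, sum_const, diag_card, offDiag_card, hD.card_eq b hb,
    smul_eq_mul, smul_eq_mul, mul_comm l]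

theorem card_inter_eq (hD : IsDesign 𝓑 k l) (hrep : ∀ q, #(𝓑.filter (q ∈ ·)) = k)
    (hsym : l * (#𝓑 - 1) = k * (k - 1)) {b c : Finset P} (hb : b ∈ 𝓑) (hc : c ∈ 𝓑)
    (hbc : b ≠ c) : #(b ∩ c) = l := by
  have hsum : ∑ c ∈ 𝓑, #(b ∩ c) = k * k := by
    rw [sum_card_inter fun q _ => hrep q, hD.card_eq b hb]
  have hsq := hD.sum_card_inter_mul_self hrep hb
  -- the variance of `#(b ∩ c)` about `l` vanishes, except for the term `c = b`
  have hvar : ∑ c ∈ 𝓑, ((#(b ∩ c) : ℤ) - l) ^ 2 = ((k : ℤ) - l) ^ 2 := by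
    have hk : k ≤ k * k := Nat.le_mul_self k
    have hl : l * #𝓑 = k * k - k + l := by
      have : l ≤ l * #𝓑 := Nat.le_mul_of_pos_right l (card_pos.mpr ⟨b, hb⟩)
      rw [Nat.mul_sub_one, Nat.mul_sub_one] at hsym
      omega
    zify [hk] at hsum hsq hl
    simp only [sub_sq, sum_add_distrib, sum_sub_distrib, ← sum_mul, ← mul_sum, sum_const,
      nsmul_eq_mul, ← sq] at hsq ⊢
    rw [hsq, hsum]
    linear_combination (l : ℤ) * hl
  rw [← add_sum_erase _ _ hb, inter_self, hD.card_eq b hb, add_eq_left,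
    sum_eq_zero_iff_of_nonneg fun _ _ => sq_nonneg _] at hvar
  have := hvar c (mem_erase.mpr ⟨hbc.symm, hc⟩)
  rw [sq_eq_zero_iff, sub_eq_zero] at this
  exact_mod_cast this

variable {p : ℕ} [Fact p.Prime] {σ : Perm P}

theorem image_eq_self_of_mem_of_mem (hD : IsDesign 𝓑 k l) (hσ : ∀ b ∈ 𝓑, b.image σ ∈ 𝓑)
    (hσp : σ ^ p = 1) (hlp : l < p) {x y : P} (hx : σ x = x) (hy : σ y = y) (hxy : x ≠ y)
    {b : Finset P} (hb : b ∈ 𝓑) (hxb : x ∈ b) (hyb : y ∈ b) : b.image σ = b := by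
  refine Perm.image_eq_self_of_card_lt hσp ?_ (hD.card_filter_mem_mem x y hxy ▸ hlp) b
    (mem_filter.mpr ⟨hb, hxb, hyb⟩)
  intro c hc
  rw [mem_filter] at hc ⊢
  exact ⟨hσ c hc.1, hx ▸ mem_image_of_mem σ hc.2.1, hy ▸ mem_image_of_mem σ hc.2.2⟩

theorem card_filter_fixedBlocks_mem_mem (hD : IsDesign 𝓑 k l) (hσ : ∀ b ∈ 𝓑, b.image σ ∈ 𝓑)
    (hσp : σ ^ p = 1) (hlp : l < p) {x y : P} (hx : σ x = x) (hy : σ y = y) (hxy : x ≠ y) :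
    #((fixedBlocks σ 𝓑).filter fun c => x ∈ c ∧ y ∈ c) = l := by
  rw [fixedBlocks, filter_filter, ← hD.card_filter_mem_mem x y hxy]
  congr 1
  refine filter_congr fun c hc => ?_
  exact ⟨fun h => h.2, fun h => ⟨hD.image_eq_self_of_mem_of_mem hσ hσp hlp hx hy hxy hc h.1 h.2, h⟩⟩

end IsDesign

namespace IsSymmetricDesign
variable {𝓑 : Finset (Finset P)} {k l p : ℕ} [Fact p.Prime] {σ : Perm P}

theorem card_filter_fixedBlocks_mem_eq (hS : IsSymmetricDesign 𝓑 k l)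
    (hσ : ∀ b ∈ 𝓑, b.image σ ∈ 𝓑) (hσp : σ ^ p = 1) (hlp : l < p) (hl : 2 ≤ l)
    {b : Finset P} (hb : b ∈ 𝓑) (hbσ : b.image σ = b) {q : P} (hq : σ q = q) (hqb : q ∈ b) :
    #((fixedBlocks σ 𝓑).filter (q ∈ ·)) = #(fixedPts σ b) := by
  set 𝓕 := (fixedBlocks σ 𝓑).filter (q ∈ ·)
  set F := fixedPts σ b
  have hb𝓕 : b ∈ 𝓕 := by simp [𝓕, hb, hbσ, hqb]
  have hqF : q ∈ F := by simp [F, hqb, hq]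
  have h := sum_card_bipartiteAbove_eq_sum_card_bipartiteBelow (s := F) (t := 𝓕)
    (r := fun x c => x ∈ c)
  simp only [bipartiteAbove, bipartiteBelow] at h
  have hpoint : ∀ x ∈ F.erase q, #(𝓕.filter (x ∈ ·)) = l := by
    intro x hx
    obtain ⟨hxq, hx⟩ := mem_erase.mp hx
    rw [filter_filter]
    exact hS.card_filter_fixedBlocks_mem_mem hσ hσp hlp hq (mem_fixedPts.mp hx).2 (Ne.symm hxq)
  -- two fixed blocks meet in `l < p` points, all of which are therefore fixed
  have hblock : ∀ c ∈ 𝓕.erase b, #(F.filter (· ∈ c)) = l := by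
    intro c hc
    obtain ⟨hcb, hc⟩ := mem_erase.mp hc
    obtain ⟨⟨hc, hcσ⟩, -⟩ : (c ∈ 𝓑 ∧ c.image σ = c) ∧ q ∈ c := by simpa [𝓕] using hc
    have hbc := hS.card_inter b hb c hc (Ne.symm hcb)
    have hfix := Perm.apply_eq_self_of_card_lt hσp
      (fun x hx => mem_inter.mpr ⟨apply_mem_of_image_eq hbσ (mem_inter.mp hx).1,
        apply_mem_of_image_eq hcσ (mem_inter.mp hx).2⟩) (hbc ▸ hlp)
    rw [← hbc]
    congr 1
    ext x
    simp only [F, mem_filter, mem_fixedPts, mem_inter]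
    exact ⟨fun h => ⟨h.1.1, h.2⟩, fun h => ⟨⟨h.1, hfix x (mem_inter.mpr h)⟩, h.2⟩⟩
  have hq𝓕 : #(𝓕.filter (q ∈ ·)) = #𝓕 :=
    congrArg card (filter_true_of_mem fun c hc => (mem_filter.mp hc).2)
  have hbF : #(F.filter (· ∈ b)) = #F :=
    congrArg card (filter_true_of_mem fun x hx => (mem_fixedPts.mp hx).1)
  rw [← add_sum_erase _ _ hqF, ← add_sum_erase _ _ hb𝓕, sum_congr rfl hpoint,
    sum_congr rfl hblock, sum_const, sum_const, card_erase_of_mem hqF, card_erase_of_mem hb𝓕,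
    hq𝓕, hbF, smul_eq_mul, smul_eq_mul] at h
  have h𝓕 : 0 < #𝓕 := card_pos.mpr ⟨b, hb𝓕⟩
  have hF : 0 < #F := card_pos.mpr ⟨q, hqF⟩
  zify [h𝓕, hF] at h
  have : ((#𝓕 : ℤ) - #F) * (l - 1) = 0 := by linear_combination -h
  rcases mul_eq_zero.mp this with h | h <;> omega

theorem card_filter_fixedBlocks_mem_eq_of_fixed (hS : IsSymmetricDesign 𝓑 k l)
    (hσ : ∀ b ∈ 𝓑, b.image σ ∈ 𝓑) (hσp : σ ^ p = 1) (hlp : l < p) (hl : 2 ≤ l)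
    {B : Finset P} (hB : B ∈ 𝓑) (hBσ : B.image σ = B) {q₀ : P} (hq₀ : q₀ ∈ fixedPts σ B)
    {q : P} (hq : σ q = q) : #((fixedBlocks σ 𝓑).filter (q ∈ ·)) = #(fixedPts σ B) := by
  obtain ⟨hq₀B, hq₀σ⟩ := mem_fixedPts.mp hq₀
  by_cases hqB : q ∈ B
  · exact hS.card_filter_fixedBlocks_mem_eq hσ hσp hlp hl hB hBσ hq hqB
  have hqq₀ : q ≠ q₀ := fun h => hqB (h ▸ hq₀B)
  obtain ⟨c, hc⟩ : (𝓑.filter fun c => q ∈ c ∧ q₀ ∈ c).Nonempty := by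
    rw [← card_pos, hS.card_filter_mem_mem q q₀ hqq₀]
    omega
  obtain ⟨hc, hqc, hq₀c⟩ := mem_filter.mp hc
  have hcσ := hS.image_eq_self_of_mem_of_mem hσ hσp hlp hq hq₀σ hqq₀ hc hqc hq₀c
  rw [hS.card_filter_fixedBlocks_mem_eq hσ hσp hlp hl hc hcσ hq hqc,
    ← hS.card_filter_fixedBlocks_mem_eq hσ hσp hlp hl hc hcσ hq₀σ hq₀c,
    hS.card_filter_fixedBlocks_mem_eq hσ hσp hlp hl hB hBσ hq₀σ hq₀B]

theorem card_fixedPts_eq_of_fixed (hS : IsSymmetricDesign 𝓑 k l)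
    (hσ : ∀ b ∈ 𝓑, b.image σ ∈ 𝓑) (hσp : σ ^ p = 1) (hlp : l < p) (hl : 2 ≤ l)
    {B : Finset P} (hB : B ∈ 𝓑) (hBσ : B.image σ = B) {q₀ : P} (hq₀ : q₀ ∈ fixedPts σ B)
    {c : Finset P} (hc : c ∈ 𝓑) (hcσ : c.image σ = c) {x : P} (hx : x ∈ fixedPts σ c) :
    #(fixedPts σ c) = #(fixedPts σ B) := by
  obtain ⟨hxc, hxσ⟩ := mem_fixedPts.mp hx
  rw [← hS.card_filter_fixedBlocks_mem_eq hσ hσp hlp hl hc hcσ hxσ hxc,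
    hS.card_filter_fixedBlocks_mem_eq_of_fixed hσ hσp hlp hl hB hBσ hq₀ hxσ]

variable [Fintype P]

theorem mul_card_fixedPts_univ_sub_one (hS : IsSymmetricDesign 𝓑 k l)
    (hσ : ∀ b ∈ 𝓑, b.image σ ∈ 𝓑) (hσp : σ ^ p = 1) (hlp : l < p) (hl : 2 ≤ l)
    {B : Finset P} (hB : B ∈ 𝓑) (hBσ : B.image σ = B) {q₀ : P} (hq₀ : q₀ ∈ fixedPts σ B) :
    l * (#(fixedPts σ univ) - 1) = #(fixedPts σ B) * (#(fixedPts σ B) - 1) := by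
  have hq₀σ := (mem_fixedPts.mp hq₀).2
  have hq₀F : q₀ ∈ fixedPts σ univ := by simp [hq₀σ]
  have h := sum_card_bipartiteAbove_eq_sum_card_bipartiteBelow
    (s := (fixedPts σ univ).erase q₀) (t := (fixedBlocks σ 𝓑).filter (q₀ ∈ ·))
    (r := fun x c => x ∈ c)
  simp only [bipartiteAbove, bipartiteBelow] at h
  have hpoint : ∀ x ∈ (fixedPts σ univ).erase q₀,
      #(((fixedBlocks σ 𝓑).filter (q₀ ∈ ·)).filter (x ∈ ·)) = l := by
    intro x hx
    obtain ⟨hxq₀, hx⟩ := mem_erase.mp hx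
    rw [filter_filter]
    exact hS.card_filter_fixedBlocks_mem_mem hσ hσp hlp hq₀σ (mem_fixedPts.mp hx).2
      (Ne.symm hxq₀)
  have hblock : ∀ c ∈ (fixedBlocks σ 𝓑).filter (q₀ ∈ ·),
      #(((fixedPts σ univ).erase q₀).filter (· ∈ c)) = #(fixedPts σ B) - 1 := by
    intro c hc
    obtain ⟨⟨hc, hcσ⟩, hq₀c⟩ : (c ∈ 𝓑 ∧ c.image σ = c) ∧ q₀ ∈ c := by simpa using hc
    have hq₀c' : q₀ ∈ fixedPts σ c := mem_fixedPts.mpr ⟨hq₀c, hq₀σ⟩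
    have : ((fixedPts σ univ).erase q₀).filter (· ∈ c) = (fixedPts σ c).erase q₀ := by
      ext x
      simp only [mem_filter, mem_erase, mem_fixedPts, mem_univ, true_and]
      tauto
    rw [this, card_erase_of_mem hq₀c',
      hS.card_fixedPts_eq_of_fixed hσ hσp hlp hl hB hBσ hq₀ hc hcσ hq₀c']
  rw [sum_congr rfl hpoint, sum_congr rfl hblock, sum_const, sum_const, card_erase_of_mem hq₀F,
    hS.card_filter_fixedBlocks_mem_eq_of_fixed hσ hσp hlp hl hB hBσ hq₀ hq₀σ,
    smul_eq_mul, smul_eq_mul] at h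
  rw [← h, mul_comm]

theorem card_fixedPts_univ_mul_le (hS : IsSymmetricDesign 𝓑 k l)
    (hσ : ∀ b ∈ 𝓑, b.image σ ∈ 𝓑) (hσp : σ ^ p = 1) (hlp : l < p) (hl : 2 ≤ l)
    {B : Finset P} (hB : B ∈ 𝓑) (hBσ : B.image σ = B) {q₀ : P} (hq₀ : q₀ ∈ fixedPts σ B)
    {y : P} (hy : σ y ≠ y) :
    #(fixedPts σ univ) * l ≤ l * #(fixedPts σ B) + #(𝓑.filter (y ∈ ·)) := by
  set 𝓨 := 𝓑.filter (y ∈ ·)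
  have h := sum_card_bipartiteAbove_eq_sum_card_bipartiteBelow (s := fixedPts σ univ) (t := 𝓨)
    (r := fun x c => x ∈ c)
  simp only [bipartiteAbove, bipartiteBelow] at h
  have hpoint : ∀ x ∈ fixedPts σ univ, #(𝓨.filter (x ∈ ·)) = l := by
    intro x hx
    have hyx : y ≠ x := fun h => hy (h ▸ (mem_fixedPts.mp hx).2)
    rw [filter_filter]
    exact hS.card_filter_mem_mem y x hyx
  have hblock : ∀ c ∈ 𝓨, (fixedPts σ univ).filter (· ∈ c) = fixedPts σ c := by
    intro c _
    ext x
    simp only [mem_filter, mem_fixedPts, mem_univ, true_and]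
    tauto
  -- a block through two fixed points is fixed
  have hterm : ∀ c ∈ 𝓨, #(fixedPts σ c) ≤ if c.image σ = c then #(fixedPts σ B) else 1 := by
    intro c hc
    have hc := (mem_filter.mp hc).1
    split_ifs with hcσ
    · rcases (fixedPts σ c).eq_empty_or_nonempty with h | ⟨x, hx⟩
      · simp [h]
      · exact (hS.card_fixedPts_eq_of_fixed hσ hσp hlp hl hB hBσ hq₀ hc hcσ hx).le
    · refine card_le_one.mpr fun a ha b hb => by_contra fun hab => hcσ ?_
      rw [mem_fixedPts] at ha hb
      exact hS.image_eq_self_of_mem_of_mem hσ hσp hlp ha.2 hb.2 hab hc ha.1 hb.1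
  -- the fixed blocks through `y` also contain `σ y`
  have hfixed : #(𝓨.filter fun c => c.image σ = c) ≤ l := by
    rw [← hS.card_filter_mem_mem y (σ y) hy.symm, filter_filter]
    exact card_le_card (monotone_filter_right _
      fun c _ (hc : y ∈ c ∧ c.image σ = c) => ⟨hc.1, apply_mem_of_image_eq hc.2 hc.1⟩)
  calc #(fixedPts σ univ) * l = ∑ x ∈ fixedPts σ univ, #(𝓨.filter (x ∈ ·)) := by
        rw [sum_congr rfl hpoint, sum_const, smul_eq_mul]
    _ = ∑ c ∈ 𝓨, #(fixedPts σ c) := by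
        rw [h]
        exact sum_congr rfl fun c hc => by rw [hblock c hc]
    _ ≤ ∑ c ∈ 𝓨, if c.image σ = c then #(fixedPts σ B) else 1 := sum_le_sum hterm
    _ ≤ l * #(fixedPts σ B) + #𝓨 := by
        rw [sum_ite, sum_const, sum_const, smul_eq_mul, smul_eq_mul, mul_one]
        exact add_le_add (Nat.mul_le_mul_right _ hfixed) (card_filter_le _ _)

end IsSymmetricDesign

end Designs

theorem biplane_fixed_counts {p s f : ℕ} (hp : p = 5 ∨ p = 7 ∨ p = 13) (hs : s ≤ 16)
    (hmod : s ≡ 16 [MOD p]) (hsf : s ≤ f) (hf : 2 * (f - 1) = s * (s - 1))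
    (hbound : f * 2 ≤ 2 * s + 16) :
    (p, s, f) = (5, 1, 1) ∨ (p, s, f) = (7, 2, 2) ∨ (p, s, f) = (13, 3, 4) := by
  simp only [Prod.mk.injEq]
  unfold Nat.ModEq at hmod
  rcases hp with rfl | rfl | rfl <;> interval_cases s <;> omega

/-- Let D be a biplane with parameters (121,16,2) and x an automorphism of
odd prime order p ∈ {5,7,13}, fixing a block B. Then (p,s,f) is one of
(5,1,1), (7,2,2), (13,3,4), where s is the number of fixed points of x in B
and f is the total number of fixed points of x. -/
theorem stmt_14 {P : Type*} [Fintype P] [DecidableEq P]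
    (hv : Fintype.card P = 121)
    (𝓑 : Finset (Finset P)) (hcard : 𝓑.card = 121)
    (hk : ∀ b ∈ 𝓑, b.card = 16)
    (hpair : ∀ p q : P, p ≠ q →
      (𝓑.filter (fun b => p ∈ b ∧ q ∈ b)).card = 2)
    (σ : Equiv.Perm P) (hσ : ∀ b ∈ 𝓑, b.image σ ∈ 𝓑)
    (p : ℕ) (hp : p = 5 ∨ p = 7 ∨ p = 13) (hord : orderOf σ = p)
    (B : Finset P) (hB : B ∈ 𝓑) (hBfix : B.image σ = B) :
    (p, (B.filter (fun q => σ q = q)).card,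
        (Finset.univ.filter (fun q => σ q = q)).card) = (5, 1, 1) ∨
    (p, (B.filter (fun q => σ q = q)).card,
        (Finset.univ.filter (fun q => σ q = q)).card) = (7, 2, 2) ∨
    (p, (B.filter (fun q => σ q = q)).card,
        (Finset.univ.filter (fun q => σ q = q)).card) = (13, 3, 4) := by
  have : Fact p.Prime := ⟨by rcases hp with rfl | rfl | rfl <;> norm_num⟩
  have hσp : σ ^ p = 1 := hord ▸ pow_orderOf_eq_one σ
  have hlp : 2 < p := by omega
  have hD : IsDesign 𝓑 16 2 := ⟨hk, hpair⟩
  have hrep : ∀ q, #(𝓑.filter (q ∈ ·)) = 16 := fun q => by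
    have := hD.card_filter_mem_mul q
    rw [hv] at this
    omega
  have hS : IsSymmetricDesign 𝓑 16 2 :=
    ⟨hD, fun b hb c hc => hD.card_inter_eq hrep (by rw [hcard]) hb hc⟩
  have hmod : #(fixedPts σ B) ≡ 16 [MOD p] := hk B hB ▸
    (Perm.card_modEq_card_filter_apply_eq_self hσp fun _ => apply_mem_of_image_eq hBfix).symm
  obtain ⟨q₀, hq₀⟩ : (fixedPts σ B).Nonempty := by
    rw [← card_pos]
    unfold Nat.ModEq at hmod
    rcases hp with rfl | rfl | rfl <;> omega
  obtain ⟨y, hy⟩ : ∃ y, σ y ≠ y := by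
    by_contra! h
    rw [show σ = 1 from Perm.ext h, orderOf_one] at hord
    omega
  exact biplane_fixed_counts hp ((card_filter_le B _).trans (hk B hB).le) hmod
    (card_le_card (filter_subset_filter _ (subset_univ B)))
    (hS.mul_card_fixedPts_univ_sub_one hσ hσp hlp le_rfl hB hBfix hq₀)
    ((hS.card_fixedPts_univ_mul_le hσ hσp hlp le_rfl hB hBfix hq₀ hy).trans_eq (by rw [hrep]; rfl))
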